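/- For all real numbers r > 0, θ > 0 and all t ≥ 0, the Laplace transform of the digamma distribution satisfies ∑_{z=1}^∞ e^{−tz} · digamma(z; r, θ) = 1 − [ψ(r+θ) − ψ(θ)]⁻¹ ∫₀¹ [1 − ((1−p)/(1−p·e^{−t}))^r] · p^{−1}(1−p)^{θ−1} dp, where the integral on the right-hand side is finite. -/

import Mathlib

/-!
Write `K_x(p) = (1 - ((1 - p)/(1 - p x))^r) p⁻¹ (1 - p)^(θ-1)`, so that the integral in the
statement is `∫₀¹ K_x` for `x = e^{-t}`. Expanding `(1 - p x)^{-r}` by the binomial series gives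
`K_0(p) - K_x(p) = ∑_{z ≥ 1} x^z (r)_z / z! · p^(z-1) (1 - p)^(r+θ-1)`, and the Beta integral
`∫₀¹ p^(z-1) (1 - p)^(r+θ-1) dp = (z-1)! / (r+θ)_z` turns the `z`-th term into
`x^z (r)_z / ((r+θ)_z z)`. Expanding `p⁻¹ = ∑ (1 - p)^n` instead shows
`∫₀¹ K_0 = ∑ (1/(θ+n) - 1/(r+θ+n)) = ψ(r+θ) - ψ(θ)`, the last step by `ψ(s+1) = ψ(s) + 1/s`
and the monotonicity of `ψ` (log-convexity of `Γ`). All series have nonnegative terms, which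
justifies the termwise integrations.
-/

open scoped BigOperators
open MeasureTheory

/-- Rising factorial `(a)_z = a(a+1)⋯(a+z-1)`. -/
noncomputable def risingFac (a : ℝ) (z : ℕ) : ℝ := ∏ i ∈ Finset.range z, (a + i)

/-- Digamma function `ψ(x) = Γ'(x)/Γ(x)`. -/
noncomputable def psi (x : ℝ) : ℝ := deriv Real.Gamma x / Real.Gamma x

/-- Probability mass function of the digamma distribution (for `z ≥ 1`). -/
noncomputable def digammaPMF (r θ : ℝ) (z : ℕ) : ℝ :=
  (psi (r + θ) - psi θ)⁻¹ * (risingFac r z / (risingFac (r + θ) z * z))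

open Set Filter

lemma risingFac_zero (a : ℝ) : risingFac a 0 = 1 :=
  Finset.prod_range_zero _

lemma risingFac_succ (a : ℝ) (n : ℕ) : risingFac a (n + 1) = risingFac a n * (a + n) :=
  Finset.prod_range_succ _ n

lemma risingFac_pos {a : ℝ} (ha : 0 < a) (n : ℕ) : 0 < risingFac a n :=
  Finset.prod_pos fun i _ => by positivity

lemma risingFac_nonneg {a : ℝ} (ha : 0 ≤ a) (n : ℕ) : 0 ≤ risingFac a n :=
  Finset.prod_nonneg fun i _ => by positivity

lemma risingFac_eq_ascPochhammer_eval (a : ℝ) (n : ℕ) :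
    risingFac a n = (ascPochhammer ℝ n).eval a := by
  induction n with
  | zero => rw [risingFac_zero, ascPochhammer_zero, Polynomial.eval_one]
  | succ n ih => rw [risingFac_succ, ascPochhammer_succ_eval, ih]

lemma choose_add_sub_one_eq_risingFac_div (a : ℝ) (n : ℕ) :
    Ring.choose (a + n - 1) n = risingFac a n / n.factorial := by
  rw [← Ring.multichoose_eq, eq_div_iff (by positivity), mul_comm, ← nsmul_eq_mul,
    Ring.factorial_nsmul_multichoose_eq_ascPochhammer, Polynomial.ascPochhammer_smeval_eq_eval,
    risingFac_eq_ascPochhammer_eval]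

theorem hasSum_risingFac_div_factorial_mul_pow (a : ℝ) {y : ℝ} (hy : |y| < 1) :
    HasSum (fun n => risingFac a n / n.factorial * y ^ n) ((1 - y) ^ (-a)) := by
  have := (Real.one_div_one_sub_rpow_hasFPowerSeriesOnBall_zero a).hasSum
    (y := y) (by simpa [← ofReal_norm, ENNReal.ofReal_lt_one] using hy)
  rw [Real.rpow_neg (by linarith [abs_lt.mp hy])]
  simpa [FormalMultilinearSeries.ofScalars_apply_eq, choose_add_sub_one_eq_risingFac_div,
    mul_comm] using this

lemma integrableOn_one_sub_rpow {s : ℝ} (hs : 0 < s) :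
    IntegrableOn (fun p : ℝ => (1 - p) ^ (s - 1)) (Ioo 0 1) := by
  have h := (intervalIntegral.intervalIntegrable_rpow' (r := s - 1) (by linarith)
    (a := 0) (b := 1)).comp_sub_left 1
  simp only [sub_zero, sub_self] at h
  rw [← intervalIntegrable_iff_integrableOn_Ioo_of_le zero_le_one]
  exact h.symm

lemma integrableOn_pow_mul_one_sub_rpow {s : ℝ} (hs : 0 < s) (m : ℕ) :
    IntegrableOn (fun p : ℝ => p ^ m * (1 - p) ^ (s - 1)) (Ioo 0 1) :=
  (integrableOn_one_sub_rpow hs).continuousOn_mul_of_subset (continuousOn_pow m) isCompact_Icc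
    measurableSet_Ioo Ioo_subset_Icc_self

/-- The Beta integral `B(m + 1, s)`. -/
lemma integral_pow_mul_one_sub_rpow {s : ℝ} (hs : 0 < s) (m : ℕ) :
    ∫ p in Ioo (0 : ℝ) 1, p ^ m * (1 - p) ^ (s - 1) = m.factorial / risingFac s (m + 1) := by
  have hbeta := Complex.betaIntegral_eval_nat_add_one_right (u := s) (by simpa using hs) m
  rw [← Complex.betaIntegral_symm, Complex.betaIntegral,
    intervalIntegral.integral_of_le zero_le_one, integral_Ioc_eq_integral_Ioo] at hbeta
  have hint : ∫ p in Ioo (0 : ℝ) 1, ((p : ℂ) ^ ((m : ℂ) + 1 - 1) * (1 - (p : ℂ)) ^ ((s : ℂ) - 1))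
      = ((∫ p in Ioo (0 : ℝ) 1, p ^ m * (1 - p) ^ (s - 1) : ℝ) : ℂ) := by
    refine Eq.trans (setIntegral_congr_fun measurableSet_Ioo fun p hp => ?_) integral_ofReal
    have h1p : 0 ≤ 1 - p := by linarith [hp.2]
    rw [add_sub_cancel_right, Complex.cpow_natCast]
    simp [Complex.ofReal_cpow h1p]
  rw [hint] at hbeta
  have hprod : ∏ j ∈ Finset.range (m + 1), ((s : ℂ) + j) = ((risingFac s (m + 1) : ℝ) : ℂ) := by
    simp [risingFac]
  rw [hprod] at hbeta
  exact_mod_cast hbeta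

lemma integral_one_sub_rpow {s : ℝ} (hs : 0 < s) :
    ∫ p in Ioo (0 : ℝ) 1, (1 - p) ^ (s - 1) = 1 / s := by
  simpa [risingFac] using integral_pow_mul_one_sub_rpow hs 0

theorem hasSum_integral_of_nonneg {ι α : Type*} [Countable ι] [MeasurableSpace α]
    {μ : Measure α} {F : ι → α → ℝ} {f : α → ℝ} (hF : ∀ n, AEStronglyMeasurable (F n) μ)
    (hF_nonneg : ∀ n, 0 ≤ᵐ[μ] F n) (hFf : ∀ᵐ a ∂μ, HasSum (F · a) (f a))
    (hf : Integrable f μ) :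
    HasSum (fun n => ∫ a, F n a ∂μ) (∫ a, f a ∂μ) := by
  refine hasSum_integral_of_dominated_convergence F hF (fun n => ?_)
    (hFf.mono fun a ha => ha.summable) (hf.congr ?_) hFf
  · filter_upwards [hF_nonneg n] with a ha using (Real.norm_of_nonneg ha).le
  · filter_upwards [hFf] with a ha using ha.tsum_eq.symm

lemma differentiableAt_Gamma_of_pos {s : ℝ} (hs : 0 < s) : DifferentiableAt ℝ Real.Gamma s :=
  Real.differentiableAt_Gamma fun m => ((neg_nonpos.2 m.cast_nonneg).trans_lt hs).ne'

lemma psi_eq_deriv_log_Gamma {s : ℝ} (hs : 0 < s) : psi s = deriv (Real.log ∘ Real.Gamma) s := by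
  rw [psi, Function.comp_def,
    deriv.log (differentiableAt_Gamma_of_pos hs) (Real.Gamma_pos_of_pos hs).ne']

lemma psi_add_one {s : ℝ} (hs : 0 < s) : psi (s + 1) = psi s + 1 / s := by
  have hshift : logDeriv (fun x => Real.Gamma (x + 1)) s = logDeriv Real.Gamma (s + 1) := by
    simpa [Function.comp_def] using logDeriv_comp (f := Real.Gamma) (g := (· + 1)) (x := s)
      (differentiableAt_Gamma_of_pos (by linarith)) (differentiableAt_id.add_const 1)
  have hfun : (fun x => Real.Gamma (x + 1)) =ᶠ[nhds s] fun x => x * Real.Gamma x := by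
    filter_upwards [eventually_gt_nhds hs] with x hx using Real.Gamma_add_one hx.ne'
  rw [psi, ← logDeriv_apply, ← hshift, (logDeriv_congr_nhds hfun).eq_of_nhds,
    logDeriv_mul (f := fun x => x) s hs.ne' (Real.Gamma_pos_of_pos hs).ne'
    differentiableAt_fun_id (differentiableAt_Gamma_of_pos hs), logDeriv_id', add_comm]
  rfl

lemma psi_add_nat {s : ℝ} (hs : 0 < s) (N : ℕ) :
    psi (s + N) = psi s + ∑ n ∈ Finset.range N, 1 / (s + n) := by
  induction N with
  | zero => simp
  | succ N ih =>
    rw [Nat.cast_succ, ← add_assoc, psi_add_one (by positivity), ih, Finset.sum_range_succ,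
      add_assoc]

lemma monotoneOn_psi : MonotoneOn psi (Ioi 0) := by
  have h := Real.convexOn_log_Gamma.monotoneOn_deriv fun x hx =>
    (differentiableAt_Gamma_of_pos hx).log (Real.Gamma_pos_of_pos hx).ne'
  intro x hx y hy hxy
  simpa only [psi_eq_deriv_log_Gamma hx, psi_eq_deriv_log_Gamma hy] using h hx hy hxy

/-- `ψ(s + r) - ψ(s) ≤ ⌈r⌉ / s` by monotonicity and the recurrence of `ψ`. -/
lemma tendsto_psi_add_sub_psi {r θ : ℝ} (hr : 0 ≤ r) (hθ : 0 < θ) :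
    Tendsto (fun N : ℕ => psi (r + θ + N) - psi (θ + N)) atTop (nhds 0) := by
  set M := ⌈r⌉₊
  have hbound (N : ℕ) : psi (r + θ + N) - psi (θ + N) ≤ M / (θ + N) := by
    have hθN : 0 < θ + N := by positivity
    have hmono := monotoneOn_psi (mem_Ioi.2 (by positivity : 0 < r + θ + N))
      (mem_Ioi.2 (by positivity : 0 < θ + N + M)) (by linarith [Nat.le_ceil r])
    have hsum : ∑ j ∈ Finset.range M, 1 / (θ + N + j) ≤ M / (θ + N) := calc
      _ ≤ ∑ j ∈ Finset.range M, 1 / (θ + N) := Finset.sum_le_sum fun j _ =>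
        one_div_le_one_div_of_le hθN (le_add_of_nonneg_right j.cast_nonneg)
      _ = M / (θ + N) := by rw [Finset.sum_const, Finset.card_range, nsmul_eq_mul, mul_one_div]
    linarith [psi_add_nat hθN M]
  have hnonneg (N : ℕ) : 0 ≤ psi (r + θ + N) - psi (θ + N) :=
    sub_nonneg.2 <| monotoneOn_psi (mem_Ioi.2 (by positivity)) (mem_Ioi.2 (by positivity))
      (by linarith)
  exact squeeze_zero hnonneg hbound <| tendsto_const_nhds.div_atTop <|
    tendsto_atTop_add_const_left _ _ tendsto_natCast_atTop_atTop

theorem hasSum_psi_sub_psi {r θ : ℝ} (hr : 0 ≤ r) (hθ : 0 < θ) :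
    HasSum (fun n : ℕ => 1 / (θ + n) - 1 / (r + θ + n)) (psi (r + θ) - psi θ) := by
  have hpartial (N : ℕ) : ∑ n ∈ Finset.range N, (1 / (θ + n) - 1 / (r + θ + n))
      = (psi (r + θ) - psi θ) - (psi (r + θ + N) - psi (θ + N)) := by
    rw [Finset.sum_sub_distrib, psi_add_nat hθ, psi_add_nat (by linarith : 0 < r + θ)]
    ring
  refine (hasSum_iff_tendsto_nat_of_nonneg (fun n => ?_) _).2 ?_
  · exact sub_nonneg.2 <| one_div_le_one_div_of_le (by positivity) (by linarith)
  · simpa only [hpartial, sub_zero] using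
      (tendsto_psi_add_sub_psi hr hθ).const_sub (psi (r + θ) - psi θ)

lemma psi_sub_psi_pos {r θ : ℝ} (hr : 0 < r) (hθ : 0 < θ) : 0 < psi (r + θ) - psi θ := by
  refine hasSum_lt (f := 0) (i := 0) (fun n => ?_) ?_ hasSum_zero (hasSum_psi_sub_psi hr.le hθ)
  · exact sub_nonneg.2 <| one_div_le_one_div_of_le (by positivity) (by linarith)
  · simpa using one_div_lt_one_div_of_lt hθ (by linarith)

lemma one_sub_one_sub_rpow_le {r p : ℝ} (hr : 0 ≤ r) (hp0 : 0 ≤ p) (hp1 : p ≤ 1) :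
    1 - (1 - p) ^ r ≤ max r 1 * p := by
  rcases le_total 1 r with h | h
  · have := one_add_mul_self_le_rpow_one_add (by linarith : -1 ≤ -p) h
    rw [max_eq_left h, ← sub_eq_add_neg] at *
    linarith
  · have := Real.rpow_le_rpow_of_exponent_ge' (x := 1 - p) (by linarith) (by linarith) hr h
    rw [max_eq_right h, Real.rpow_one] at *
    linarith

/-- For `x = e^{-t}` this is the integrand of the Laplace transform; at `x = 0` it is the
integrand of Gauss' formula for `ψ(r + θ) - ψ(θ)`. -/
noncomputable def digammaKernel (r θ x p : ℝ) : ℝ :=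
  (1 - ((1 - p) / (1 - p * x)) ^ r) * (p⁻¹ * (1 - p) ^ (θ - 1))

section digammaKernel

variable {r θ x p : ℝ}

lemma digammaKernel_nonneg (hr : 0 ≤ r) (hx1 : x ≤ 1) (hp : p ∈ Ioo 0 1) :
    0 ≤ digammaKernel r θ x p := by
  obtain ⟨hp0, hp1⟩ := hp
  have hq : 0 < 1 - p * x := by nlinarith
  refine mul_nonneg (sub_nonneg.2 <| Real.rpow_le_one (by positivity) ?_ hr)
    (mul_nonneg (inv_nonneg.2 hp0.le) (Real.rpow_nonneg (by linarith) _))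
  rw [div_le_one hq]
  nlinarith

lemma digammaKernel_le_digammaKernel_zero (hr : 0 ≤ r) (hx0 : 0 ≤ x) (hx1 : x ≤ 1)
    (hp : p ∈ Ioo 0 1) :
    digammaKernel r θ x p ≤ digammaKernel r θ 0 p := by
  obtain ⟨hp0, hp1⟩ := hp
  refine mul_le_mul_of_nonneg_right (sub_le_sub_left ?_ _)
    (mul_nonneg (inv_nonneg.2 hp0.le) (Real.rpow_nonneg (by linarith) _))
  rw [mul_zero, sub_zero, div_one]
  refine Real.rpow_le_rpow (by linarith) ((le_div_iff₀ (by nlinarith)).2 ?_) hr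
  nlinarith [mul_nonneg (sub_nonneg.2 hp1.le) (mul_nonneg hp0.le hx0)]

lemma continuousOn_digammaKernel (hx1 : x ≤ 1) :
    ContinuousOn (digammaKernel r θ x) (Ioo 0 1) := by
  have hq : ∀ p ∈ Ioo (0 : ℝ) 1, 1 - p * x ≠ 0 := fun p hp => by nlinarith [hp.1, hp.2]
  refine ((continuousOn_const.sub ?_).mul ((continuousOn_inv₀.mono fun p hp => hp.1.ne').mul ?_))
  · refine ((continuousOn_const.sub continuousOn_id).div (by fun_prop) hq).rpow_const fun p hp =>
      Or.inl (div_ne_zero (sub_ne_zero.2 hp.2.ne') (hq p hp))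
  · exact fun p hp => (Real.continuousAt_rpow_const _ _ (Or.inl (sub_ne_zero.2 hp.2.ne'))).comp
      (continuousAt_const.sub continuousAt_id) |>.continuousWithinAt

lemma integrableOn_digammaKernel_zero (hr : 0 ≤ r) (hθ : 0 < θ) :
    IntegrableOn (digammaKernel r θ 0) (Ioo 0 1) := by
  refine ((integrableOn_one_sub_rpow hθ).const_mul (max r 1)).mono'
    ((continuousOn_digammaKernel zero_le_one).aestronglyMeasurable measurableSet_Ioo)
    ((ae_restrict_iff' measurableSet_Ioo).2 (Eventually.of_forall fun p hp => ?_))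
  rw [Real.norm_of_nonneg (digammaKernel_nonneg hr zero_le_one hp), digammaKernel,
    mul_zero, sub_zero, div_one, ← mul_assoc]
  refine mul_le_mul_of_nonneg_right ?_ (Real.rpow_nonneg (by linarith [hp.2]) _)
  rw [mul_inv_le_iff₀ hp.1]
  exact one_sub_one_sub_rpow_le hr hp.1.le hp.2.le

lemma integrableOn_digammaKernel (hr : 0 ≤ r) (hθ : 0 < θ) (hx0 : 0 ≤ x) (hx1 : x ≤ 1) :
    IntegrableOn (digammaKernel r θ x) (Ioo 0 1) := by
  refine (integrableOn_digammaKernel_zero hr hθ).mono'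
    ((continuousOn_digammaKernel hx1).aestronglyMeasurable measurableSet_Ioo)
    ((ae_restrict_iff' measurableSet_Ioo).2 (Eventually.of_forall fun p hp => ?_))
  rw [Real.norm_of_nonneg (digammaKernel_nonneg hr hx1 hp)]
  exact digammaKernel_le_digammaKernel_zero hr hx0 hx1 hp

/-- Expand `p⁻¹ = ∑ (1 - p)^n`. -/
lemma hasSum_digammaKernel_zero (hp : p ∈ Ioo 0 1) :
    HasSum (fun n : ℕ => (1 - p) ^ (θ + n - 1) - (1 - p) ^ (r + θ + n - 1))
      (digammaKernel r θ 0 p) := by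
  have h1p : 0 < 1 - p := by linarith [hp.2]
  have hgeom := (hasSum_geometric_of_lt_one h1p.le (by linarith [hp.1])).mul_right
    ((1 - p) ^ (θ - 1) - (1 - p) ^ (r + θ - 1))
  have hterm (n : ℕ) : (1 - p) ^ n * ((1 - p) ^ (θ - 1) - (1 - p) ^ (r + θ - 1))
      = (1 - p) ^ (θ + n - 1) - (1 - p) ^ (r + θ + n - 1) := by
    rw [← Real.rpow_natCast, mul_sub, ← Real.rpow_add h1p, ← Real.rpow_add h1p]
    ring_nf
  have hsum : (1 - (1 - p))⁻¹ * ((1 - p) ^ (θ - 1) - (1 - p) ^ (r + θ - 1))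
      = digammaKernel r θ 0 p := by
    rw [digammaKernel, mul_zero, sub_zero, div_one, sub_sub_cancel,
      show r + θ - 1 = r + (θ - 1) by ring, Real.rpow_add h1p]
    ring
  simpa only [hterm, hsum] using hgeom

theorem integral_digammaKernel_zero (hr : 0 ≤ r) (hθ : 0 < θ) :
    ∫ p in Ioo (0 : ℝ) 1, digammaKernel r θ 0 p = psi (r + θ) - psi θ := by
  have hθn (n : ℕ) : 0 < θ + n := by positivity
  have hrθn (n : ℕ) : 0 < r + θ + n := by positivity
  have hsum := hasSum_integral_of_nonneg
    (F := fun (n : ℕ) p => (1 - p) ^ (θ + n - 1) - (1 - p) ^ (r + θ + n - 1))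
    (fun n => ((integrableOn_one_sub_rpow (hθn n)).sub
      (integrableOn_one_sub_rpow (hrθn n))).aestronglyMeasurable)
    (fun n => (ae_restrict_iff' measurableSet_Ioo).2 <| Eventually.of_forall fun p hp =>
      sub_nonneg.2 <| Real.rpow_le_rpow_of_exponent_ge (by linarith [hp.2]) (by linarith [hp.1])
        (by linarith))
    ((ae_restrict_iff' measurableSet_Ioo).2 <| Eventually.of_forall fun p hp =>
      hasSum_digammaKernel_zero hp)
    (integrableOn_digammaKernel_zero hr hθ)
  refine hsum.unique ?_
  convert hasSum_psi_sub_psi hr hθ using 2 with n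
  rw [integral_sub (integrableOn_one_sub_rpow (hθn n))
    (integrableOn_one_sub_rpow (hrθn n)),
    integral_one_sub_rpow (hθn n), integral_one_sub_rpow (hrθn n)]

/-- Expand `(1 - p x)^{-r}` by the binomial series. -/
lemma hasSum_digammaKernel_sub (hx0 : 0 ≤ x) (hx1 : x ≤ 1) (hp : p ∈ Ioo 0 1) :
    HasSum (fun m : ℕ => risingFac r (m + 1) / (m + 1).factorial * x ^ (m + 1) *
        (p ^ m * (1 - p) ^ (r + θ - 1)))
      (digammaKernel r θ 0 p - digammaKernel r θ x p) := by
  obtain ⟨hp0, hp1⟩ := hp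
  have h1p : 0 < 1 - p := by linarith
  have hq : 0 < 1 - p * x := by nlinarith
  have hbin := (hasSum_nat_add_iff' 1).2 <| hasSum_risingFac_div_factorial_mul_pow r
    (y := p * x) (by rw [abs_of_nonneg (by positivity)]; nlinarith)
  simp only [Finset.sum_range_one, risingFac_zero, Nat.factorial_zero, Nat.cast_one, div_one,
    pow_zero, mul_one] at hbin
  have := hbin.mul_right (p⁻¹ * (1 - p) ^ (r + θ - 1))
  have hterm (m : ℕ) : risingFac r (m + 1) / (m + 1).factorial * (p * x) ^ (m + 1) *
      (p⁻¹ * (1 - p) ^ (r + θ - 1)) = risingFac r (m + 1) / (m + 1).factorial * x ^ (m + 1) *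
        (p ^ m * (1 - p) ^ (r + θ - 1)) := by
    field_simp
    ring
  have hsum : ((1 - p * x) ^ (-r) - 1) * (p⁻¹ * (1 - p) ^ (r + θ - 1))
      = digammaKernel r θ 0 p - digammaKernel r θ x p := by
    rw [digammaKernel, digammaKernel, mul_zero, sub_zero, div_one, Real.div_rpow h1p.le hq.le,
      Real.rpow_neg hq.le, show r + θ - 1 = r + (θ - 1) by ring, Real.rpow_add h1p]
    field_simp
    ring
  simpa only [hterm, hsum] using this

end digammaKernel

theorem hasSum_pow_mul_digammaPMF {r θ x : ℝ} (hr : 0 ≤ r) (hθ : 0 < θ) (hx0 : 0 ≤ x)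
    (hx1 : x ≤ 1) :
    HasSum (fun m : ℕ => x ^ (m + 1) * digammaPMF r θ (m + 1))
      ((psi (r + θ) - psi θ)⁻¹ * ((∫ p in Ioo (0 : ℝ) 1, digammaKernel r θ 0 p) -
        ∫ p in Ioo (0 : ℝ) 1, digammaKernel r θ x p)) := by
  have hrθ : 0 < r + θ := by linarith
  have hF (m : ℕ) := (integrableOn_pow_mul_one_sub_rpow hrθ m).const_mul
    (risingFac r (m + 1) / (m + 1).factorial * x ^ (m + 1))
  have hsum := hasSum_integral_of_nonneg (fun m => (hF m).aestronglyMeasurable)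
    (fun m => (ae_restrict_iff' measurableSet_Ioo).2 <| Eventually.of_forall fun p hp => by
      have := risingFac_nonneg hr (m + 1)
      have := Real.rpow_nonneg (sub_nonneg.2 hp.2.le) (r + θ - 1)
      have := hp.1
      positivity)
    ((ae_restrict_iff' measurableSet_Ioo).2 <| Eventually.of_forall fun p hp =>
      hasSum_digammaKernel_sub hx0 hx1 hp)
    ((integrableOn_digammaKernel_zero hr hθ).sub (integrableOn_digammaKernel hr hθ hx0 hx1))
  rw [integral_sub (integrableOn_digammaKernel_zero hr hθ)
    (integrableOn_digammaKernel hr hθ hx0 hx1)] at hsum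
  have hterm (m : ℕ) : (psi (r + θ) - psi θ)⁻¹ * ∫ p in Ioo (0 : ℝ) 1,
      risingFac r (m + 1) / (m + 1).factorial * x ^ (m + 1) * (p ^ m * (1 - p) ^ (r + θ - 1))
      = x ^ (m + 1) * digammaPMF r θ (m + 1) := by
    have := (risingFac_pos hrθ (m + 1)).ne'
    rw [integral_const_mul, integral_pow_mul_one_sub_rpow hrθ, digammaPMF, Nat.factorial_succ]
    push_cast
    field_simp
  simpa only [hterm] using hsum.mul_left (psi (r + θ) - psi θ)⁻¹

theorem stmt_2 (r θ t : ℝ) (hr : 0 < r) (hθ : 0 < θ) (ht : 0 ≤ t) :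
    IntegrableOn
      (fun p : ℝ => (1 - ((1 - p) / (1 - p * Real.exp (-t))) ^ r) * (p⁻¹ * (1 - p) ^ (θ - 1)))
      (Set.Ioo 0 1) ∧
    HasSum (fun z : ℕ => Real.exp (-t * ((z : ℝ) + 1)) * digammaPMF r θ (z + 1))
      (1 - (psi (r + θ) - psi θ)⁻¹ *
        ∫ p in Set.Ioo (0 : ℝ) 1,
          (1 - ((1 - p) / (1 - p * Real.exp (-t))) ^ r) * (p⁻¹ * (1 - p) ^ (θ - 1))) := by
  have hx0 : 0 ≤ Real.exp (-t) := (Real.exp_pos _).le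
  have hx1 : Real.exp (-t) ≤ 1 := Real.exp_le_one_iff.2 (neg_nonpos.2 ht)
  refine ⟨integrableOn_digammaKernel hr.le hθ hx0 hx1, ?_⟩
  have hsum := hasSum_pow_mul_digammaPMF hr.le hθ hx0 hx1
  rw [integral_digammaKernel_zero hr.le hθ, mul_sub,
    inv_mul_cancel₀ (psi_sub_psi_pos hr hθ).ne'] at hsum
  have hexp (z : ℕ) : Real.exp (-t * ((z : ℝ) + 1)) = Real.exp (-t) ^ (z + 1) := by
    rw [← Real.exp_nat_mul]
    push_cast
    ring_nf
  simp only [hexp]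
  exact hsum
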